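/- arXiv:quant-ph/0404006 — 2 statements merged into one kernel-verified Lean document; each statement's English description precedes it below -/
import Mathlib

section
/- For square matrices A₁, A₂, A₃, B₁, B₂, B₃ of the same size, [A₁⊗A₂⊗A₃, B₁⊗B₂⊗B₃] = (1/4)([A₁,B₁]⊗{A₂,B₂}⊗{A₃,B₃} + {A₁,B₁}⊗[A₂,B₂]⊗{A₃,B₃} + {A₁,B₁}⊗{A₂,B₂}⊗[A₃,B₃] + [A₁,B₁]⊗[A₂,B₂]⊗[A₃,B₃]). -/
open Matrix Kronecker

noncomputable def σ : Fin 4 → Matrix (Fin 2) (Fin 2) ℂ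
  | 0 => 1
  | 1 => !![0, 1; 1, 0]
  | 2 => !![0, -Complex.I; Complex.I, 0]
  | 3 => !![1, 0; 0, -1]

/-- rescaled Pauli matrices λⱼ = σⱼ/√2 (λ₀ = I₂/√2) -/
noncomputable def lam (j : Fin 4) : Matrix (Fin 2) (Fin 2) ℂ :=
  ((Real.sqrt 2 : ℂ))⁻¹ • σ j

/-- structure constants of commutators: (ad_{λⱼ})ₖₗ = cⱼₖˡ, via orthonormality -/
noncomputable def adL (j : Fin 4) : Matrix (Fin 4) (Fin 4) ℂ :=
  Matrix.of fun k l => ((lam j * lam k - lam k * lam j) * lam l).trace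

/-- structure constants of anticommutators: (aad_{λⱼ})ₖₗ = sⱼₖˡ -/
noncomputable def aadL (j : Fin 4) : Matrix (Fin 4) (Fin 4) ℂ :=
  Matrix.of fun k l => ((lam j * lam k + lam k * lam j) * lam l).trace

/-- ad_{Λⱼₖ} = (1/2)(ad_{λⱼ} ⊗ aad_{λₖ} + aad_{λⱼ} ⊗ ad_{λₖ}) -/
noncomputable def adLL (j k : Fin 4) : Matrix (Fin 4 × Fin 4) (Fin 4 × Fin 4) ℂ :=
  ((2 : ℂ))⁻¹ • (adL j ⊗ₖ aadL k + aadL j ⊗ₖ adL k)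
lemma my_sub_kronecker {l m p q : Type*} (A B : Matrix l m ℂ) (C : Matrix p q ℂ) :
    (A - B) ⊗ₖ C = A ⊗ₖ C - B ⊗ₖ C := by
  ext ⟨i,j⟩ ⟨k,l⟩; simp [Matrix.kroneckerMap, sub_mul]

lemma my_kronecker_sub {l m p q : Type*} (A : Matrix l m ℂ) (B C : Matrix p q ℂ) :
    A ⊗ₖ (B - C) = A ⊗ₖ B - A ⊗ₖ C := by
  ext ⟨i,j⟩ ⟨k,l⟩; simp [Matrix.kroneckerMap, mul_sub]

theorem stmt2 {n : ℕ} (A₁ A₂ A₃ B₁ B₂ B₃ : Matrix (Fin n) (Fin n) ℂ) :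
    ((A₁ ⊗ₖ A₂) ⊗ₖ A₃) * ((B₁ ⊗ₖ B₂) ⊗ₖ B₃)
      - ((B₁ ⊗ₖ B₂) ⊗ₖ B₃) * ((A₁ ⊗ₖ A₂) ⊗ₖ A₃) =
      ((4 : ℂ))⁻¹ •
        (((A₁ * B₁ - B₁ * A₁) ⊗ₖ (A₂ * B₂ + B₂ * A₂)) ⊗ₖ (A₃ * B₃ + B₃ * A₃)
        + ((A₁ * B₁ + B₁ * A₁) ⊗ₖ (A₂ * B₂ - B₂ * A₂)) ⊗ₖ (A₃ * B₃ + B₃ * A₃)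
        + ((A₁ * B₁ + B₁ * A₁) ⊗ₖ (A₂ * B₂ + B₂ * A₂)) ⊗ₖ (A₃ * B₃ - B₃ * A₃)
        + ((A₁ * B₁ - B₁ * A₁) ⊗ₖ (A₂ * B₂ - B₂ * A₂)) ⊗ₖ (A₃ * B₃ - B₃ * A₃)) := by
  simp only [my_sub_kronecker, my_kronecker_sub, Matrix.add_kronecker,
    Matrix.kronecker_add, ← Matrix.mul_kronecker_mul, smul_add, smul_sub]
  module
end

section
/- Let M be a square matrix over ℂ satisfying M³ = (1/2)M. Then for all real t, exp(-itM) = I - i√2 sin(t/√2) M - 2(1 - cos(t/√2)) M². -/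
open Matrix Kronecker

/-! Since `M³ = s²M` with `s = 1/√2`, the elements `p, q = (M² ± sM) / (2s²)` are orthogonal
idempotents with `M = s (p - q)` and `M² = s² (p + q)`. The exponential of a multiple of an
idempotent is `exp (x p) = 1 + (eˣ - 1) p`, so `exp (zM) = 1 + (e^{zs} - 1) p + (e^{-zs} - 1) q`,
which regroups into `1 + (sinh (zs) / s) M + ((cosh (zs) - 1) / s²) M²`; at `z = -it` the
hyperbolic functions become `sin` and `cos` of `t/√2`. -/

open NormedSpace

section Idempotent

variable {𝕂 𝔸 : Type*} [RCLike 𝕂] [NormedRing 𝔸] [NormedAlgebra 𝕂 𝔸] [CompleteSpace 𝔸]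

theorem IsIdempotentElem.exp_smul {p : 𝔸} (hp : IsIdempotentElem p) (x : 𝕂) :
    exp (x • p) = 1 + (exp x - 1) • p := by
  have hterm : ∀ n : ℕ, (n.factorial⁻¹ : 𝕂) • (x • p) ^ n =
      ((n.factorial⁻¹ : 𝕂) • x ^ n) • p + if n = 0 then 1 - p else 0 := by
    rintro (_ | n)
    · simp
    · simp [smul_pow, hp.pow_succ_eq, smul_smul]
  have hsum :=
    ((exp_series_hasSum_exp' (𝕂 := 𝕂) x).smul_const p).add (hasSum_ite_eq 0 (1 - p))
  rw [← funext hterm] at hsum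
  rw [(exp_series_hasSum_exp' (𝕂 := 𝕂) (x • p)).unique hsum]
  module

theorem exp_smul_add_smul_of_orthogonal {p q : 𝔸} (hp : IsIdempotentElem p)
    (hq : IsIdempotentElem q) (hpq : p * q = 0) (hqp : q * p = 0) (x y : 𝕂) :
    exp (x • p + y • q) = 1 + (exp x - 1) • p + (exp y - 1) • q := by
  let +nondep : NormedAlgebra ℚ 𝔸 := .restrictScalars ℚ 𝕂 𝔸
  have hcomm : Commute (x • p) (y • q) :=
    (Commute.smul_left (hpq.trans hqp.symm) x).smul_right y
  rw [exp_add_of_commute hcomm, hp.exp_smul, hq.exp_smul]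
  simp only [mul_add, add_mul, one_mul, mul_one, smul_mul_smul_comm, hpq, smul_zero]
  abel

end Idempotent

theorem sq_add_smul_mul_sq_add_smul_of_pow_three_eq {K A : Type*} [CommRing K] [Ring A]
    [Algebra K A] {a : A} {μ : K} (ha : a ^ 3 = μ ^ 2 • a) (ν : K) :
    (a ^ 2 + ν • a) * (a ^ 2 + μ • a) = (μ ^ 2 + ν * μ) • (a ^ 2 + μ • a) := by
  have heigen : a * (a ^ 2 + μ • a) = μ • (a ^ 2 + μ • a) := by
    rw [mul_add, ← pow_succ', ha, mul_smul_comm, ← sq]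
    module
  set P := a ^ 2 + μ • a
  rw [add_mul, sq a, mul_assoc, heigen, smul_mul_assoc, mul_smul_comm, heigen, smul_smul]
  module

theorem exp_smul_of_pow_three_eq {𝔸 : Type*} [NormedRing 𝔸] [NormedAlgebra ℂ 𝔸]
    [CompleteSpace 𝔸] {a : 𝔸} {s : ℂ} (hs : s ≠ 0) (ha : a ^ 3 = s ^ 2 • a) (z : ℂ) :
    exp (z • a) =
      1 + (Complex.sinh (z * s) / s) • a + ((Complex.cosh (z * s) - 1) / s ^ 2) • a ^ 2 := by
  have ha' : a ^ 3 = (-s) ^ 2 • a := by rwa [neg_sq]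
  -- the spectral projections of `a` onto its eigenvalues `s` and `-s`
  set p := (2 * s ^ 2)⁻¹ • (a ^ 2 + s • a)
  set q := (2 * s ^ 2)⁻¹ • (a ^ 2 + (-s) • a)
  have hp : IsIdempotentElem p := by
    rw [IsIdempotentElem, smul_mul_smul_comm, sq_add_smul_mul_sq_add_smul_of_pow_three_eq ha,
      smul_smul]
    congr 1
    field_simp
    ring
  have hq : IsIdempotentElem q := by
    rw [IsIdempotentElem, smul_mul_smul_comm, sq_add_smul_mul_sq_add_smul_of_pow_three_eq ha',
      smul_smul]
    congr 1
    field_simp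
    ring
  have hpq : p * q = 0 := by
    rw [smul_mul_smul_comm, sq_add_smul_mul_sq_add_smul_of_pow_three_eq ha',
      show (-s) ^ 2 + s * -s = 0 by ring, zero_smul, smul_zero]
  have hqp : q * p = 0 := by
    rw [smul_mul_smul_comm, sq_add_smul_mul_sq_add_smul_of_pow_three_eq ha,
      show s ^ 2 + -s * s = 0 by ring, zero_smul, smul_zero]
  have hdecomp : z • a = (z * s) • p + (-(z * s)) • q := by
    simp only [p, q, smul_add, smul_smul]
    match_scalars <;> field_simp <;> ring
  rw [hdecomp, exp_smul_add_smul_of_orthogonal hp hq hpq hqp, ← Complex.exp_eq_exp_ℂ,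
    Complex.sinh, Complex.cosh]
  simp only [p, q, smul_add, smul_smul]
  match_scalars <;> field_simp <;> ring

theorem Matrix.exp_smul_of_pow_three_eq {m : Type*} [Fintype m] [DecidableEq m]
    {A : Matrix m m ℂ} {s : ℂ} (hs : s ≠ 0) (hA : A ^ 3 = s ^ 2 • A) (z : ℂ) :
    exp (z • A) =
      1 + (Complex.sinh (z * s) / s) • A + ((Complex.cosh (z * s) - 1) / s ^ 2) • A ^ 2 :=
  open scoped Matrix.Norms.Operator in _root_.exp_smul_of_pow_three_eq hs hA z

theorem stmt14 {n : ℕ} (M : Matrix (Fin n) (Fin n) ℂ) (hM : M ^ 3 = ((2 : ℂ))⁻¹ • M)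
    (t : ℝ) :
    NormedSpace.exp ((-(Complex.I * t)) • M) =
      1 - (Complex.I * Real.sqrt 2 * Real.sin (t / Real.sqrt 2)) • M
        - ((2 : ℂ) * ((1 - Real.cos (t / Real.sqrt 2) : ℝ) : ℂ)) • M ^ 2 := by
  have hsqrt : ((Real.sqrt 2 : ℝ) : ℂ) ^ 2 = 2 := by
    rw [← Complex.ofReal_pow, Real.sq_sqrt zero_le_two, Complex.ofReal_ofNat]
  have hsqrt0 : ((Real.sqrt 2 : ℝ) : ℂ) ≠ 0 := by
    exact_mod_cast (Real.sqrt_pos.2 two_pos).ne'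
  have hs : (((Real.sqrt 2 : ℝ) : ℂ)⁻¹) ^ 2 = 2⁻¹ := by rw [inv_pow, hsqrt]
  have hangle : -(Complex.I * t) * ((Real.sqrt 2 : ℝ) : ℂ)⁻¹ =
      ((-(t / Real.sqrt 2) : ℝ) : ℂ) * Complex.I := by
    push_cast
    ring
  rw [Matrix.exp_smul_of_pow_three_eq (inv_ne_zero hsqrt0) (hs ▸ hM), hangle,
    Complex.sinh_mul_I, Complex.cosh_mul_I, hs, div_inv_eq_mul, div_inv_eq_mul,
    ← Complex.ofReal_sin, ← Complex.ofReal_cos, Real.sin_neg, Real.cos_neg]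
  push_cast
  match_scalars <;> ring
end
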